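/- The normalization function N is strictly increasing: let Q be a probability measure, L : M → [0,∞) measurable with L(θ) + b > 0 Q-a.e., φ = (f')⁻¹ strictly increasing and positive. Suppose for each i ∈ {1,2}, λ_i > 0 and β_i ∈ ℝ satisfy ∫ φ(−(β_i + L(θ))/λ_i) dQ(θ) = 1. If λ₁ < λ₂ then β₁ < β₂. -/

import Mathlib

open Set MeasureTheory

/-- The normalization function is strictly increasing. Let `Q` be a probability
measure, `L : M → [0,∞)` measurable, `φ = (f')⁻¹` strictly increasing and positive. Suppose
for `i ∈ {1,2}`, `λ_i > 0` and `β_i` satisfy `∫ φ(-(β_i + L θ)/λ_i) dQ = 1`, with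
`β_i + L θ > 0` `Q`-a.e. If `λ₁ < λ₂` then `β₁ < β₂`. -/
theorem stmt8 {M : Type*} [MeasurableSpace M] (Q : Measure M) [IsProbabilityMeasure Q]
    (L : M → ℝ) (hLmeas : Measurable L) (hLnonneg : ∀ θ, 0 ≤ L θ)
    (φ : ℝ → ℝ) (hφ : StrictMono φ) (hφpos : ∀ t, 0 < φ t)
    (lam₁ lam₂ β₁ β₂ : ℝ) (hlam₁ : 0 < lam₁) (hlam₂ : 0 < lam₂)
    (hpos₁ : ∀ᵐ θ ∂Q, 0 < β₁ + L θ) (hpos₂ : ∀ᵐ θ ∂Q, 0 < β₂ + L θ)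
    (hint₁ : Integrable (fun θ => φ (-(β₁ + L θ)/lam₁)) Q)
    (hint₂ : Integrable (fun θ => φ (-(β₂ + L θ)/lam₂)) Q)
    (heq₁ : ∫ θ, φ (-(β₁ + L θ)/lam₁) ∂Q = 1)
    (heq₂ : ∫ θ, φ (-(β₂ + L θ)/lam₂) ∂Q = 1)
    (hlt : lam₁ < lam₂) :
    β₁ < β₂ := by
  by_contra h
  push_neg at h
  set g : M → ℝ := fun θ => φ (-(β₂ + L θ)/lam₂) - φ (-(β₁ + L θ)/lam₁) with hg
  have hgint : Integrable g Q := hint₂.sub hint₁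
  have hgi : ∫ θ, g θ ∂Q = 0 := by
    rw [hg, integral_sub hint₂ hint₁, heq₁, heq₂]; ring
  have hgpos : ∀ᵐ θ ∂Q, 0 < g θ := by
    filter_upwards [hpos₂] with θ hθ
    have harg : -(β₁ + L θ)/lam₁ < -(β₂ + L θ)/lam₂ := by
      rw [div_lt_div_iff₀ hlam₁ hlam₂]; nlinarith
    simpa [hg] using sub_pos.mpr (hφ harg)
  have h0 : 0 < ∫ θ, g θ ∂Q := by
    rw [integral_pos_iff_support_of_nonneg_ae (hgpos.mono fun θ hθ => hθ.le) hgint]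
    by_contra hs
    push_neg at hs
    have hs0 : Q (Function.support g) = 0 := le_antisymm hs zero_le
    have hz : ∀ᵐ θ ∂Q, g θ = 0 := by
      rw [ae_iff]
      simpa [Function.support] using hs0
    have : ∀ᵐ θ ∂Q, False := by
      filter_upwards [hz, hgpos] with θ h1 h2
      simp [h1] at h2
    obtain ⟨θ, hθ⟩ := this.exists
    exact hθ
  linarith
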